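/- In the Euclidean plane (EuclideanSpace ℝ (Fin 2)), let c₁, c₂, c₃ be the vertices of an equilateral triangle of side length s, and let r > 0 satisfy 0 < s < 2·r and s ≠ r·√3. Then each of the three pairwise intersections of the circles of radius r centered at c₁, c₂, c₃ consists of exactly two points, these three two-point intersections are pairwise disjoint, and hence the union of the three circles contains exactly six points lying on more than one of the circles. (This is the paper's claim that the triangular projection figure of three equal circles has exactly six intersection points.) -/

import Mathlib

/-!
Two circles of radius `r` whose centres are at distance `0 < d < 2r` meet in the two points
`m ± w`, where `m` is the midpoint of the centres and `w ⟂ (c₂ - c₁)` with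
`‖w‖² = r² - d²/4`; in the plane there are no others. A point on all three circles is equidistant
from the vertices, as is the centroid, at distance `s/√3`. In the plane two distinct points cannot
both be equidistant from three distinct points (the three would lie on two circles with distinct
centres, which meet in at most two points), so such a point is the centroid and `r = s/√3`.
-/

open Module Metric
open scoped RealInnerProductSpace

theorem exists_dist_eq_div_sqrt_three {V P : Type*} [NormedAddCommGroup V]
    [InnerProductSpace ℝ V] [MetricSpace P] [NormedAddTorsor V P] {c₁ c₂ c₃ : P} {s : ℝ}
    (h₁₂ : dist c₁ c₂ = s) (h₂₃ : dist c₂ c₃ = s) (h₃₁ : dist c₃ c₁ = s) :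
    ∃ g : P, dist c₁ g = s / √3 ∧ dist c₂ g = s / √3 ∧ dist c₃ g = s / √3 := by
  obtain ⟨a, rfl⟩ : ∃ a : V, a +ᵥ c₁ = c₂ := ⟨c₂ -ᵥ c₁, vsub_vadd c₂ c₁⟩
  obtain ⟨b, rfl⟩ : ∃ b : V, b +ᵥ c₁ = c₃ := ⟨c₃ -ᵥ c₁, vsub_vadd c₃ c₁⟩
  rw [dist_vadd_right] at h₁₂
  rw [dist_vadd_left] at h₃₁
  rw [dist_vadd_cancel_right, dist_eq_norm] at h₂₃
  have hs : 0 ≤ s := h₁₂ ▸ norm_nonneg a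
  have of_sq : ∀ x : V, ⟪x, x⟫ = s ^ 2 / 3 → ‖x‖ = s / √3 := by
    intro x hx
    rw [← sq_eq_sq₀ (norm_nonneg x) (by positivity), ← real_inner_self_eq_norm_sq, hx, div_pow,
      Real.sq_sqrt (by norm_num)]
  replace h₁₂ : ⟪a, a⟫ = s ^ 2 := by rw [real_inner_self_eq_norm_sq, h₁₂]
  replace h₃₁ : ⟪b, b⟫ = s ^ 2 := by rw [real_inner_self_eq_norm_sq, h₃₁]
  replace h₂₃ : ⟪a - b, a - b⟫ = s ^ 2 := by rw [real_inner_self_eq_norm_sq, h₂₃]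
  refine ⟨(3⁻¹ : ℝ) • (a + b) +ᵥ c₁, (dist_vadd_right _ _).trans (of_sq _ ?_),
    ((dist_vadd_cancel_right _ _ _).trans (dist_eq_norm _ _)).trans (of_sq _ ?_),
    ((dist_vadd_cancel_right _ _ _).trans (dist_eq_norm _ _)).trans (of_sq _ ?_)⟩
  all_goals
    simp only [inner_add_left, inner_add_right, inner_sub_left, inner_sub_right,
      real_inner_smul_left, real_inner_smul_right, real_inner_comm a b] at h₂₃ ⊢
    linarith

section

variable {V P : Type*} [NormedAddCommGroup V] [InnerProductSpace ℝ V] [FiniteDimensional ℝ V]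
  [MetricSpace P] [NormedAddTorsor V P]

theorem exists_inner_eq_zero_norm_eq (hd : 2 ≤ finrank ℝ V) (v : V) {t : ℝ} (ht : 0 ≤ t) :
    ∃ w : V, ⟪v, w⟫ = 0 ∧ ‖w‖ = t := by
  have hK : (ℝ ∙ v)ᗮ ≠ ⊥ := by
    intro h
    have hsum := (ℝ ∙ v).finrank_add_finrank_orthogonal
    have hv : finrank ℝ (ℝ ∙ v) ≤ 1 := (finrank_span_le_card ({v} : Set V)).trans (by simp)
    rw [h, finrank_bot] at hsum
    omega
  obtain ⟨w, hw, hw0⟩ := Submodule.exists_mem_ne_zero_of_ne_bot hK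
  refine ⟨(t / ‖w‖) • w, ?_, ?_⟩
  · rw [inner_smul_right, Submodule.mem_orthogonal_singleton_iff_inner_right.1 hw, mul_zero]
  · rw [norm_smul, Real.norm_eq_abs, abs_div, abs_norm, abs_of_nonneg ht,
      div_mul_cancel₀ _ (norm_ne_zero_iff.2 hw0)]

theorem exists_ne_mem_sphere_inter_sphere (hd : 2 ≤ finrank ℝ V) {c₁ c₂ : P} {r : ℝ}
    (h : dist c₁ c₂ < 2 * r) :
    ∃ p q : P, p ≠ q ∧ p ∈ sphere c₁ r ∩ sphere c₂ r ∧ q ∈ sphere c₁ r ∩ sphere c₂ r := by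
  set a : V := (2⁻¹ : ℝ) • (c₂ -ᵥ c₁)
  have hv : c₂ -ᵥ c₁ = a + a := by rw [← two_smul ℝ, smul_smul]; norm_num
  have ha : ‖a‖ = dist c₁ c₂ / 2 := by
    rw [norm_smul, dist_comm, dist_eq_norm_vsub V, Real.norm_of_nonneg (by norm_num)]
    ring
  have hr : 0 ≤ r := by linarith [dist_nonneg (x := c₁) (y := c₂)]
  have hpos : 0 < r ^ 2 - ‖a‖ ^ 2 := by
    rw [ha]; nlinarith [dist_nonneg (x := c₁) (y := c₂)]
  obtain ⟨w, hw, hwn⟩ := exists_inner_eq_zero_norm_eq hd a (Real.sqrt_nonneg (r ^ 2 - ‖a‖ ^ 2))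
  have hw0 : w ≠ 0 := by
    rw [← norm_ne_zero_iff, hwn]; positivity
  have hsum : ‖a‖ * ‖a‖ + ‖w‖ * ‖w‖ = r * r := by
    rw [hwn, Real.mul_self_sqrt hpos.le]; ring
  have hadd : ‖a + w‖ = r := by
    rw [norm_add_eq_sqrt_iff_real_inner_eq_zero.2 hw, hsum, Real.sqrt_mul_self hr]
  have hsub : ‖a - w‖ = r := by
    rw [norm_sub_eq_sqrt_iff_real_inner_eq_zero.2 hw, hsum, Real.sqrt_mul_self hr]
  refine ⟨(a + w) +ᵥ c₁, (a - w) +ᵥ c₁, ?_, ⟨?_, ?_⟩, ?_, ?_⟩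
  · intro hpq
    have h2w : (2 : ℝ) • w = (a + w) - (a - w) := by module
    rw [(vadd_right_cancel_iff c₁).1 hpq, sub_self, smul_eq_zero] at h2w
    exact hw0 (h2w.resolve_left two_ne_zero)
  · rw [mem_sphere, dist_eq_norm_vsub V, vadd_vsub, hadd]
  · rw [mem_sphere, dist_eq_norm_vsub V, vadd_vsub_assoc, ← neg_vsub_eq_vsub_rev c₂, hv,
      show a + w + -(a + a) = -(a - w) by abel, norm_neg, hsub]
  · rw [mem_sphere, dist_eq_norm_vsub V, vadd_vsub, hsub]
  · rw [mem_sphere, dist_eq_norm_vsub V, vadd_vsub_assoc, ← neg_vsub_eq_vsub_rev c₂, hv,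
      show a - w + -(a + a) = -(a + w) by abel, norm_neg, hadd]

theorem exists_sphere_inter_sphere_eq_pair (hd : finrank ℝ V = 2) {c₁ c₂ : P} {r : ℝ}
    (hc : c₁ ≠ c₂) (h : dist c₁ c₂ < 2 * r) :
    ∃ p q : P, p ≠ q ∧ sphere c₁ r ∩ sphere c₂ r = {p, q} := by
  obtain ⟨p, q, hpq, ⟨hp₁, hp₂⟩, hq₁, hq₂⟩ := exists_ne_mem_sphere_inter_sphere hd.ge h
  refine ⟨p, q, hpq, Set.Subset.antisymm ?_ <|
    Set.insert_subset ⟨hp₁, hp₂⟩ (Set.singleton_subset_iff.2 ⟨hq₁, hq₂⟩)⟩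
  rintro x ⟨hx₁, hx₂⟩
  exact EuclideanGeometry.eq_of_dist_eq_of_dist_eq_of_finrank_eq_two hd hc hpq hp₁ hq₁ hx₁
    hp₂ hq₂ hx₂

theorem eq_of_dist_eq_of_dist_eq_of_dist_eq_of_finrank_eq_two (hd : finrank ℝ V = 2)
    {p₁ p₂ p₃ x y : P} {r ρ : ℝ} (h₁₂ : p₁ ≠ p₂) (h₁₃ : p₁ ≠ p₃) (h₂₃ : p₂ ≠ p₃)
    (hx₁ : dist p₁ x = r) (hx₂ : dist p₂ x = r) (hx₃ : dist p₃ x = r)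
    (hy₁ : dist p₁ y = ρ) (hy₂ : dist p₂ y = ρ) (hy₃ : dist p₃ y = ρ) : x = y := by
  by_contra hxy
  rcases EuclideanGeometry.eq_of_dist_eq_of_dist_eq_of_finrank_eq_two hd hxy h₁₂
    hx₁ hx₂ hx₃ hy₁ hy₂ hy₃ with h | h
  exacts [h₁₃ h.symm, h₂₃ h.symm]

theorem eq_mul_sqrt_three_of_dist_eq (hd : finrank ℝ V = 2) {c₁ c₂ c₃ x : P} {s r : ℝ}
    (hs : 0 < s) (h₁₂ : dist c₁ c₂ = s) (h₂₃ : dist c₂ c₃ = s) (h₃₁ : dist c₃ c₁ = s)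
    (hx₁ : dist c₁ x = r) (hx₂ : dist c₂ x = r) (hx₃ : dist c₃ x = r) : s = r * √3 := by
  obtain ⟨g, hg₁, hg₂, hg₃⟩ := exists_dist_eq_div_sqrt_three h₁₂ h₂₃ h₃₁
  have hne : ∀ {p q : P}, dist p q = s → p ≠ q := fun h => dist_pos.1 (h ▸ hs)
  obtain rfl := eq_of_dist_eq_of_dist_eq_of_dist_eq_of_finrank_eq_two hd (hne h₁₂)
    (hne h₃₁).symm (hne h₂₃) hx₁ hx₂ hx₃ hg₁ hg₂ hg₃
  rw [← hx₁, hg₁, div_mul_cancel₀ _ (by positivity)]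

end

theorem triangular_configuration_six_intersection_points_general
    (c₁ c₂ c₃ : EuclideanSpace ℝ (Fin 2)) (s r : ℝ)
    (hs : 0 < s) (hlt : s < 2 * r) (hne : s ≠ r * Real.sqrt 3)
    (h₁₂ : dist c₁ c₂ = s) (h₂₃ : dist c₂ c₃ = s) (h₃₁ : dist c₃ c₁ = s) :
    (∃ p q : EuclideanSpace ℝ (Fin 2), p ≠ q ∧
        Metric.sphere c₁ r ∩ Metric.sphere c₂ r = {p, q}) ∧
    (∃ p q : EuclideanSpace ℝ (Fin 2), p ≠ q ∧
        Metric.sphere c₂ r ∩ Metric.sphere c₃ r = {p, q}) ∧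
    (∃ p q : EuclideanSpace ℝ (Fin 2), p ≠ q ∧
        Metric.sphere c₃ r ∩ Metric.sphere c₁ r = {p, q}) ∧
    Disjoint (Metric.sphere c₁ r ∩ Metric.sphere c₂ r)
      (Metric.sphere c₂ r ∩ Metric.sphere c₃ r) ∧
    Disjoint (Metric.sphere c₂ r ∩ Metric.sphere c₃ r)
      (Metric.sphere c₃ r ∩ Metric.sphere c₁ r) ∧
    Disjoint (Metric.sphere c₁ r ∩ Metric.sphere c₂ r)
      (Metric.sphere c₃ r ∩ Metric.sphere c₁ r) ∧
    Set.ncard {x ∈ Metric.sphere c₁ r ∪ Metric.sphere c₂ r ∪ Metric.sphere c₃ r |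
        (x ∈ Metric.sphere c₁ r ∧ x ∈ Metric.sphere c₂ r) ∨
        (x ∈ Metric.sphere c₂ r ∧ x ∈ Metric.sphere c₃ r) ∨
        (x ∈ Metric.sphere c₃ r ∧ x ∈ Metric.sphere c₁ r)} = 6 := by
  have hd := finrank_euclideanSpace_fin (𝕜 := ℝ) (n := 2)
  have pair : ∀ {a b : EuclideanSpace ℝ (Fin 2)}, dist a b = s →
      ∃ p q, p ≠ q ∧ sphere a r ∩ sphere b r = {p, q} := fun hab =>
    exists_sphere_inter_sphere_eq_pair hd (dist_pos.1 (hab ▸ hs)) (hab ▸ hlt)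
  obtain ⟨p₁, q₁, hpq₁, hA⟩ := pair h₁₂
  obtain ⟨p₂, q₂, hpq₂, hB⟩ := pair h₂₃
  obtain ⟨p₃, q₃, hpq₃, hC⟩ := pair h₃₁
  have not_on_all : ∀ x, x ∈ sphere c₁ r → x ∈ sphere c₂ r → x ∈ sphere c₃ r → False :=
    fun x h₁ h₂ h₃ => hne <| eq_mul_sqrt_three_of_dist_eq hd hs h₁₂ h₂₃ h₃₁
      (mem_sphere'.1 h₁) (mem_sphere'.1 h₂) (mem_sphere'.1 h₃)
  have hAB : Disjoint (sphere c₁ r ∩ sphere c₂ r) (sphere c₂ r ∩ sphere c₃ r) :=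
    Set.disjoint_left.2 fun x h h' => not_on_all x h.1 h.2 h'.2
  have hBC : Disjoint (sphere c₂ r ∩ sphere c₃ r) (sphere c₃ r ∩ sphere c₁ r) :=
    Set.disjoint_left.2 fun x h h' => not_on_all x h'.2 h.1 h.2
  have hAC : Disjoint (sphere c₁ r ∩ sphere c₂ r) (sphere c₃ r ∩ sphere c₁ r) :=
    Set.disjoint_left.2 fun x h h' => not_on_all x h.1 h.2 h'.1
  have hunion : {x ∈ sphere c₁ r ∪ sphere c₂ r ∪ sphere c₃ r |
      (x ∈ sphere c₁ r ∧ x ∈ sphere c₂ r) ∨ (x ∈ sphere c₂ r ∧ x ∈ sphere c₃ r) ∨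
        (x ∈ sphere c₃ r ∧ x ∈ sphere c₁ r)} =
      (sphere c₁ r ∩ sphere c₂ r ∪ sphere c₂ r ∩ sphere c₃ r) ∪ sphere c₃ r ∩ sphere c₁ r := by
    ext x; simp only [Set.mem_ofPred_eq, Set.mem_union, Set.mem_inter_iff]; tauto
  refine ⟨⟨p₁, q₁, hpq₁, hA⟩, ⟨p₂, q₂, hpq₂, hB⟩, ⟨p₃, q₃, hpq₃, hC⟩, hAB, hBC, hAC, ?_⟩
  simp only [hA, hB, hC] at hAB hBC hAC
  rw [hunion, hA, hB, hC, Set.ncard_union_eq (Set.disjoint_union_left.2 ⟨hAC, hBC⟩),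
    Set.ncard_union_eq hAB, Set.ncard_pair hpq₁, Set.ncard_pair hpq₂, Set.ncard_pair hpq₃]

/-- For three equal circles of radius r centered at the vertices of an equilateral triangle
of side s with 0 < s < 2r and s ≠ r√3: each pairwise intersection has exactly two points,
the three intersections are pairwise disjoint, and exactly six points of the union lie on
more than one of the circles. -/
theorem triangular_configuration_six_intersection_points
    (c₁ c₂ c₃ : EuclideanSpace ℝ (Fin 2)) (s r : ℝ)
    (hs : 0 < s) (hr : 0 < r) (hlt : s < 2 * r) (hne : s ≠ r * Real.sqrt 3)
    (h₁₂ : dist c₁ c₂ = s) (h₂₃ : dist c₂ c₃ = s) (h₃₁ : dist c₃ c₁ = s) :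
    (∃ p q : EuclideanSpace ℝ (Fin 2), p ≠ q ∧
        Metric.sphere c₁ r ∩ Metric.sphere c₂ r = {p, q}) ∧
    (∃ p q : EuclideanSpace ℝ (Fin 2), p ≠ q ∧
        Metric.sphere c₂ r ∩ Metric.sphere c₃ r = {p, q}) ∧
    (∃ p q : EuclideanSpace ℝ (Fin 2), p ≠ q ∧
        Metric.sphere c₃ r ∩ Metric.sphere c₁ r = {p, q}) ∧
    Disjoint (Metric.sphere c₁ r ∩ Metric.sphere c₂ r)
      (Metric.sphere c₂ r ∩ Metric.sphere c₃ r) ∧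
    Disjoint (Metric.sphere c₂ r ∩ Metric.sphere c₃ r)
      (Metric.sphere c₃ r ∩ Metric.sphere c₁ r) ∧
    Disjoint (Metric.sphere c₁ r ∩ Metric.sphere c₂ r)
      (Metric.sphere c₃ r ∩ Metric.sphere c₁ r) ∧
    Set.ncard {x ∈ Metric.sphere c₁ r ∪ Metric.sphere c₂ r ∪ Metric.sphere c₃ r |
        (x ∈ Metric.sphere c₁ r ∧ x ∈ Metric.sphere c₂ r) ∨
        (x ∈ Metric.sphere c₂ r ∧ x ∈ Metric.sphere c₃ r) ∨
        (x ∈ Metric.sphere c₃ r ∧ x ∈ Metric.sphere c₁ r)} = 6 :=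
  triangular_configuration_six_intersection_points_general c₁ c₂ c₃ s r hs hlt hne h₁₂ h₂₃ h₃₁
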